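/- arXiv:1806.06090 — 2 statements merged into one kernel-verified Lean document; each statement's English description precedes it below -/
import Mathlib

section
/- If G is a finite group with a unique cyclic subgroup of order 2a and a unique cyclic subgroup of order a, where a = 4 or a is an odd prime, and every other nontrivial cyclic subgroup of G has order 2, then G is isomorphic to C_{2a} or D_{4a}. -/
private lemma zpowers_isCyclic' {G : Type*} [Group G] (x : G) :
    IsCyclic (Subgroup.zpowers x) := by
  refine ⟨⟨⟨x, Subgroup.mem_zpowers x⟩, fun y => ?_⟩⟩
  obtain ⟨k, hk⟩ := Subgroup.mem_zpowers_iff.mp y.2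
  exact ⟨k, Subtype.ext (by simpa using hk)⟩

theorem stmt_13 (G : Type*) [Group G] [Finite G] (a : ℕ)
    (ha : a = 4 ∨ (Nat.Prime a ∧ Odd a))
    (huniqa : ∃! H : Subgroup G, IsCyclic H ∧ Nat.card H = a)
    (huniq2a : ∃! H : Subgroup G, IsCyclic H ∧ Nat.card H = 2 * a)
    (hall : ∀ H : Subgroup G, IsCyclic H → H ≠ ⊥ →
      Nat.card H = 2 ∨ Nat.card H = a ∨ Nat.card H = 2 * a) :
    Nonempty (G ≃* Multiplicative (ZMod (2 * a))) ∨
      Nonempty (G ≃* DihedralGroup (2 * a)) := by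
  classical
  obtain ⟨C, ⟨hCcyc, hCcard⟩, hCuniq⟩ := huniq2a
  obtain ⟨A, ⟨hAcyc, hAcard⟩, hAuniq⟩ := huniqa
  have ha3 : 3 ≤ a := by
    rcases ha with rfl | ⟨hp, hodd⟩
    · norm_num
    · have h2 := hp.two_le
      have h1 : a % 2 = 1 := Nat.odd_iff.mp hodd
      omega
  -- generator of C
  obtain ⟨g0, hg0⟩ := hCcyc.exists_generator
  set c : G := (g0 : G) with hc_def
  have hordc : orderOf c = 2 * a := by
    have htop : Subgroup.zpowers g0 = (⊤ : Subgroup C) := by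
      ext x; simp [hg0 x]
    have h1 : orderOf g0 = Nat.card C := by
      rw [← Nat.card_zpowers, htop, Subgroup.card_top]
    have h2 : orderOf c = orderOf g0 :=
      orderOf_injective C.subtype C.subtype_injective g0
    rw [h2, h1, hCcard]
  have hcC : c ∈ C := g0.2
  have hCz : Subgroup.zpowers c = C := by
    refine hCuniq _ ⟨zpowers_isCyclic' c, ?_⟩
    rw [Nat.card_zpowers, hordc]
  -- order classification
  have horder : ∀ x : G, x ≠ 1 →
      orderOf x = 2 ∨ orderOf x = a ∨ orderOf x = 2 * a := by
    intro x hx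
    have := hall (Subgroup.zpowers x) (zpowers_isCyclic' x)
      (by simpa [Subgroup.zpowers_eq_bot] using hx)
    simpa [Nat.card_zpowers] using this
  have hmem2a : ∀ x : G, orderOf x = 2 * a → x ∈ C := by
    intro x hx
    have hz : Subgroup.zpowers x = C :=
      hCuniq _ ⟨zpowers_isCyclic' x, by rw [Nat.card_zpowers, hx]⟩
    rw [← hz]; exact Subgroup.mem_zpowers x
  have hmema : ∀ x : G, orderOf x = a → x ∈ C := by
    intro x hx
    have hc2 : orderOf (c ^ 2) = a := by
      rw [orderOf_pow, hordc]
      have : Nat.gcd (2 * a) 2 = 2 := by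
        have : (2 : ℕ) ∣ 2 * a := ⟨a, rfl⟩
        exact Nat.gcd_eq_right this
      rw [this]; omega
    have h1 : Subgroup.zpowers (c ^ 2) = A :=
      hAuniq _ ⟨zpowers_isCyclic' _, by rw [Nat.card_zpowers, hc2]⟩
    have h2 : Subgroup.zpowers x = A :=
      hAuniq _ ⟨zpowers_isCyclic' _, by rw [Nat.card_zpowers, hx]⟩
    have hx_mem : x ∈ Subgroup.zpowers (c ^ 2) := by
      rw [h1, ← h2]; exact Subgroup.mem_zpowers x
    obtain ⟨k, hk⟩ := Subgroup.mem_zpowers_iff.mp hx_mem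
    rw [← hk]
    exact Subgroup.zpow_mem C (Subgroup.pow_mem C hcC 2) k
  -- elements outside C square to 1
  have hsq : ∀ s : G, s ∉ C → s * s = 1 := by
    intro s hs
    rcases eq_or_ne s 1 with rfl | hs1
    · simp
    rcases horder s hs1 with h2 | ha' | h2a
    · have := pow_orderOf_eq_one s
      rw [h2, pow_two] at this; exact this
    · exact absurd (hmema s ha') hs
    · exact absurd (hmem2a s h2a) hs
  -- elements outside C invert c
  have hinv : ∀ s : G, s ∉ C → s * c * s = c⁻¹ := by
    intro s hs
    have hsc : s * c ∉ C := by
      intro h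
      exact hs (by simpa using mul_mem h (inv_mem hcC))
    have h2 := hsq (s * c) hsc
    have h2' : (s * c * s) * c = 1 := by
      rw [mul_assoc (s * c) s c]; exact h2
    exact eq_inv_of_mul_eq_one_left h2'
  have hswap : ∀ s : G, s ∉ C → s * c = c⁻¹ * s := by
    intro s hs
    have h1 := hinv s hs
    have h2 := hsq s hs
    calc s * c = s * c * (s * s) := by rw [h2, mul_one]
    _ = (s * c * s) * s := by rw [mul_assoc (s*c)]
    _ = c⁻¹ * s := by rw [h1]
  -- elements commuting with c lie in C
  have hcent : ∀ u : G, u * c = c * u → u ∈ C := by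
    intro u hu
    by_contra huC
    have hu2 : u * u = 1 := hsq u huC
    have hu2' : u ^ 2 = 1 := by rw [pow_two]; exact hu2
    have hcomm : Commute u c := hu
    set v := u * c with hv_def
    have hv1 : v ≠ 1 := by
      intro h
      exact huC (eq_inv_of_mul_eq_one_left h ▸ inv_mem hcC)
    have hcane : c ^ a ≠ 1 := by
      intro h
      have := orderOf_dvd_of_pow_eq_one h
      rw [hordc] at this
      have := Nat.le_of_dvd (by omega) this
      omega
    rcases horder v hv1 with h2 | ha' | h2a
    · have hv2 : v ^ 2 = 1 := by rw [← h2]; exact pow_orderOf_eq_one v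
      have : v ^ 2 = u ^ 2 * c ^ 2 := hcomm.mul_pow 2
      rw [hv2, hu2', one_mul] at this
      have hd := orderOf_dvd_of_pow_eq_one this.symm
      rw [hordc] at hd
      have := Nat.le_of_dvd (by omega) hd
      omega
    · have hva : v ^ a = 1 := by rw [← ha']; exact pow_orderOf_eq_one v
      have hmul : v ^ a = u ^ a * c ^ a := hcomm.mul_pow a
      rcases Nat.even_or_odd a with he | ho
      · obtain ⟨k, hk⟩ := he
        have hua : u ^ a = 1 := by
          have : u ^ a = (u ^ 2) ^ k := by rw [← pow_mul]; congr 1; omega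
          rw [this, hu2', one_pow]
        rw [hva, hua, one_mul] at hmul
        exact hcane hmul.symm
      · obtain ⟨k, hk⟩ := ho
        have hua : u ^ a = u := by
          rw [hk, pow_add, pow_mul, hu2', one_pow, one_mul, pow_one]
        rw [hva, hua] at hmul
        have : u = (c ^ a)⁻¹ := by
          rw [eq_inv_iff_mul_eq_one]; exact hmul.symm
        exact huC (this ▸ inv_mem (Subgroup.pow_mem C hcC a))
    · have hvC := hmem2a v h2a
      have : u ∈ C := by
        have h := mul_mem hvC (inv_mem hcC)
        simpa [hv_def, mul_assoc] using h
      exact huC this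
  by_cases hC : ∀ x : G, x ∈ C
  · -- cyclic case
    left
    have htop : C = ⊤ := by ext x; simp [hC x]
    have hGcyc : IsCyclic G := by
      rw [htop] at hCcyc
      exact isCyclic_of_surjective Subgroup.topEquiv.toMonoidHom
        Subgroup.topEquiv.surjective
    have hcard : Nat.card G = 2 * a := by
      rw [← Subgroup.card_top (G := G), ← htop, hCcard]
    rw [← hcard]
    exact ⟨(zmodCyclicMulEquiv hGcyc).symm⟩
  · -- dihedral case
    right
    push_neg at hC
    obtain ⟨t, ht⟩ := hC
    have ht2 : t * t = 1 := hsq t ht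
    have htinv : t⁻¹ = t := inv_eq_of_mul_eq_one_right ht2
    haveI : NeZero (2 * a) := ⟨by omega⟩
    set pw : ZMod (2 * a) → G := fun i => c ^ i.val with hpw_def
    have hpw_add : ∀ i j : ZMod (2 * a), pw (i + j) = pw i * pw j := by
      intro i j
      show c ^ (i + j).val = c ^ i.val * c ^ j.val
      rw [ZMod.val_add, ← pow_add]
      have h := pow_mod_orderOf c (i.val + j.val)
      rw [hordc] at h
      exact h
    have hpw_zero : pw 0 = 1 := by
      show c ^ (0 : ZMod (2 * a)).val = 1
      rw [ZMod.val_zero, pow_zero]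
    have hpw_neg : ∀ i : ZMod (2 * a), pw (-i) = (pw i)⁻¹ := by
      intro i
      refine eq_inv_of_mul_eq_one_left ?_
      rw [← hpw_add, neg_add_cancel, hpw_zero]
    have hpw_mem : ∀ i, pw i ∈ C := fun i => Subgroup.pow_mem C hcC _
    have hkey : ∀ i : ZMod (2 * a), t * pw i = pw (-i) * t := by
      intro i
      have h1 : t * pw i * t⁻¹ = (t * c * t⁻¹) ^ i.val := by
        show t * c ^ i.val * t⁻¹ = _
        have := map_pow (MulAut.conj t) c i.val
        simp only [MulAut.conj_apply] at this; exact this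
      rw [htinv] at h1
      rw [hinv t ht] at h1
      have h2 : t * pw i * t = (pw i)⁻¹ := by
        rw [h1]; exact inv_pow c i.val
      rw [hpw_neg]
      calc t * pw i = (t * pw i * t) * t := by
            rw [mul_assoc, ht2, mul_one]
      _ = (pw i)⁻¹ * t := by rw [h2]
    have hkey' : ∀ i : ZMod (2 * a), pw i * t = t * pw (-i) := by
      intro i
      rw [hkey (-i), neg_neg]
    -- the homomorphism
    set F : DihedralGroup (2 * a) → G := fun x =>
      match x with
      | DihedralGroup.r i => pw i
      | DihedralGroup.sr i => t * pw i
      with hF_def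
    have hFmul : ∀ x y : DihedralGroup (2 * a), F (x * y) = F x * F y := by
      intro x y
      rcases x with i | i <;> rcases y with j | j
      · show pw (i + j) = pw i * pw j
        exact hpw_add i j
      · show t * pw (j - i) = pw i * (t * pw j)
        rw [← mul_assoc, hkey' i, mul_assoc, ← hpw_add]
        congr 2
        ring
      · show t * pw (i + j) = t * pw i * pw j
        rw [hpw_add, mul_assoc]
      · show pw (j - i) = t * pw i * (t * pw j)
        rw [mul_assoc, ← mul_assoc (pw i), hkey' i, ← mul_assoc,
          ← mul_assoc, ht2, one_mul, ← hpw_add]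
        congr 1
        ring
    set Fh : DihedralGroup (2 * a) →* G := MonoidHom.mk' F hFmul with hFh_def
    have hFinj : Function.Injective Fh := by
      rw [injective_iff_map_eq_one]
      intro x hx
      rcases x with i | i
      · have hx' : c ^ i.val = 1 := hx
        have hd := orderOf_dvd_of_pow_eq_one hx'
        rw [hordc] at hd
        have hlt : i.val < 2 * a := ZMod.val_lt i
        have hval : i.val = 0 := by
          rcases Nat.eq_zero_or_pos i.val with h | h
          · exact h
          · exact absurd (Nat.le_of_dvd h hd) (by omega)
        have : i = 0 := (ZMod.val_eq_zero i).mp hval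
        rw [this, ← DihedralGroup.one_def]
      · exfalso
        have hx' : t * pw i = 1 := hx
        have : t = (pw i)⁻¹ := eq_inv_of_mul_eq_one_left hx'
        exact ht (this ▸ inv_mem (hpw_mem i))
    have hpow_nat : ∀ n : ℕ, pw (n : ZMod (2 * a)) = c ^ n := by
      intro n
      show c ^ (ZMod.val (n : ZMod (2 * a))) = c ^ n
      rw [ZMod.val_natCast]
      have h := pow_mod_orderOf c n
      rw [hordc] at h
      exact h
    have hmemC_pow : ∀ x : G, x ∈ C → ∃ n : ℕ, c ^ n = x := by
      intro x hx
      rw [← hCz] at hx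
      have hfo : IsOfFinOrder c := isOfFinOrder_of_finite c
      rw [← hfo.mem_powers_iff_mem_zpowers] at hx
      exact (Submonoid.mem_powers_iff x c).mp hx
    have hFsurj : Function.Surjective Fh := by
      intro x
      by_cases hx : x ∈ C
      · obtain ⟨n, hn⟩ := hmemC_pow x hx
        exact ⟨DihedralGroup.r (n : ZMod (2 * a)), by
          show pw (n : ZMod (2 * a)) = x
          rw [hpow_nat, hn]⟩
      · have htx : t * x ∈ C := by
          apply hcent
          have h1 := hswap t ht
          have h2 := hswap x hx
          have h4 : c * t * c = t := by
            rw [mul_assoc, h1, ← mul_assoc, mul_inv_cancel, one_mul]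
          have h3 : t * c⁻¹ = c * t := mul_inv_eq_iff_eq_mul.mpr h4.symm
          calc t * x * c = t * (x * c) := by rw [mul_assoc]
          _ = t * (c⁻¹ * x) := by rw [h2]
          _ = (t * c⁻¹) * x := by rw [mul_assoc]
          _ = c * t * x := by rw [h3]
          _ = c * (t * x) := by rw [mul_assoc]
        obtain ⟨n, hn⟩ := hmemC_pow (t * x) htx
        refine ⟨DihedralGroup.sr (n : ZMod (2 * a)), ?_⟩
        show t * pw (n : ZMod (2 * a)) = x
        rw [hpow_nat, hn, ← mul_assoc, ht2, one_mul]
    exact ⟨(MulEquiv.ofBijective Fh ⟨hFinj, hFsurj⟩).symm⟩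
end

section
/- If G is a finite group all of whose nontrivial cyclic subgroups have order 2 or 4, and the number of cyclic subgroups of order 4 is odd, then either G has exactly one cyclic subgroup of order 4 and G ≅ C_4 or D_8, or G has exactly three cyclic subgroups of order 4 and G ≅ Q_8. -/
/-!
Every element of `G` has order dividing 4, an element has order 4 iff its square is nontrivial,
and a cyclic group of order 4 has two generators, so `2 c = #{x | x² ≠ 1}` where `c` is the
number of cyclic subgroups of order 4. Since `G` is a 2-group acting by conjugation on these `c`
subgroups and `c` is odd, one of them, `⟨a⟩`, is normal: every `x` conjugates `a` to `a` or `a⁻¹`.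

Counting squares along the cosets of `⟨a⟩` shows that outside the centralizer `C` of `a` the
elements with `x² ≠ 1` come in blocks of 4, while `|C| ≡ 2 #{x ∈ C | x² ≠ 1} (mod 8)`. Hence
`|C| ≡ 4 (mod 8)`, and as `|C|` is a power of 2, `C = ⟨a⟩`. Then either `G = ⟨a⟩ ≅ C₄`, or
`G = ⟨a⟩ ∪ u⟨a⟩` with `u a u⁻¹ = a⁻¹` and `u² ∈ {1, a²}`, that is `G ≅ D₈` or `G ≅ Q₈`; the
value of `c` is then read off from these three groups.
-/

open Subgroup Pointwise

def cyclicSubgroupsOfCard (G : Type*) [Group G] (n : ℕ) :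
    SubMulAction (ConjAct G) (Subgroup G) where
  carrier := {H | IsCyclic H ∧ Nat.card H = n}
  smul_mem' g H hH := by
    have := hH.1
    exact ⟨isCyclic_of_surjective (equivSMul g H).toMonoidHom (equivSMul g H).surjective,
      (Nat.card_congr (equivSMul g H).toEquiv).symm.trans hH.2⟩

section

variable {G : Type*} [Group G]

theorem IsPGroup.exists_normal_cyclic_of_not_dvd {p : ℕ} [Fact p.Prime] (hG : IsPGroup p G)
    {n : ℕ} (hn : ¬ p ∣ Nat.card {H : Subgroup G // IsCyclic H ∧ Nat.card H = n}) :
    ∃ H : Subgroup G, H.Normal ∧ IsCyclic H ∧ Nat.card H = n := by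
  obtain ⟨⟨H, hH⟩, hfix⟩ :=
    (hG.of_equiv ConjAct.toConjAct).nonempty_fixed_point_of_prime_not_dvd_card
      (cyclicSubgroupsOfCard G n) hn
  refine ⟨H, normalizer_eq_top_iff.1 ((eq_top_iff' _).2 fun g => ?_), hH⟩
  exact conjAct_pointwise_smul_iff.1 (congrArg Subtype.val (hfix (ConjAct.toConjAct g)))

theorem card_orderOf_eq_totient_mul_card_cyclic [Finite G] (n : ℕ) :
    Nat.card {g : G // orderOf g = n} =
      n.totient * Nat.card {H : Subgroup G // IsCyclic H ∧ Nat.card H = n} := by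
  classical
  let gen : {g : G // orderOf g = n} → {H : Subgroup G // IsCyclic H ∧ Nat.card H = n} :=
    fun g => ⟨zpowers g.1, inferInstance, by rw [Nat.card_zpowers, g.2]⟩
  have hfiber (H : {H : Subgroup G // IsCyclic H ∧ Nat.card H = n}) :
      Nat.card {g // gen g = H} = n.totient := by
    obtain ⟨H, hcyc, hcard⟩ := H
    have := Fintype.ofFinite H
    let generators : {g // gen g = ⟨H, hcyc, hcard⟩} ≃ {h : H // orderOf h = n} :=
      { toFun := fun g =>
          ⟨⟨g.1.1, (congrArg Subtype.val g.2 : zpowers g.1.1 = H).le (mem_zpowers _)⟩,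
            by rw [Subgroup.orderOf_mk, g.1.2]⟩
        invFun := fun h => ⟨⟨h.1.1, (Subgroup.orderOf_coe _).trans h.2⟩, Subtype.ext <|
          eq_of_le_of_card_ge (zpowers_le.2 h.1.2)
            (by rw [Nat.card_zpowers, Subgroup.orderOf_coe, h.2, hcard])⟩
        left_inv := fun _ => rfl
        right_inv := fun _ => rfl }
    rw [Nat.card_congr generators, Nat.card_eq_fintype_card, Fintype.card_subtype]
    exact IsCyclic.card_orderOf_eq_totient (by rw [← Nat.card_eq_fintype_card, hcard])
  have := Fintype.ofFinite {H : Subgroup G // IsCyclic H ∧ Nat.card H = n}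
  rw [← Nat.card_congr (Equiv.sigmaFiberEquiv gen), Nat.card_sigma,
    Finset.sum_congr rfl fun H _ => hfiber H, Finset.sum_const, Finset.card_univ, smul_eq_mul,
    mul_comm, Nat.card_eq_fintype_card]

theorem orderOf_dvd_natCard_of_mul_mem [Finite G] {a : G} {S : Set G}
    (hS : ∀ x ∈ S, x * a ∈ S) : orderOf a ∣ Nat.card S := by
  have hpow (x : G) (hx : x ∈ S) (k : ℕ) : x * a ^ k ∈ S := by
    induction k with
    | zero => simpa
    | succ k ih => simpa [pow_succ, ← mul_assoc] using hS _ ih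
  have hsat : QuotientGroup.mk ⁻¹' (QuotientGroup.mk '' S : Set (G ⧸ zpowers a)) = S := by
    refine Set.Subset.antisymm ?_ (Set.subset_preimage_image _ _)
    rintro y ⟨x, hx, hxy⟩
    obtain ⟨k, hk⟩ := mem_powers_iff_mem_zpowers.2 (QuotientGroup.eq.1 hxy)
    simpa [hk] using hpow x hx k
  rw [← hsat, QuotientGroup.card_preimage_mk, Nat.card_zpowers]
  exact dvd_mul_right _ _

theorem card_modEq_card_sq_eq_one [Finite G] :
    Nat.card G ≡ Nat.card {x : G // x ^ 2 = 1} [MOD 2] := by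
  classical
  have := Fintype.ofFinite G
  let inv : Function.End G := fun x => x⁻¹
  have hinv : inv ^ 2 ^ 1 = 1 := funext inv_inv
  rw [Nat.card_eq_fintype_card, Nat.card_eq_fintype_card]
  convert Equiv.Perm.card_fixedPoints_modEq hinv using 3
  ext x
  exact (inv_eq_iff_mul_eq_one.trans (by rw [sq])).symm

theorem eq_one_or_eq_or_eq_sq_or_eq_inv_of_mem_zpowers {a y : G} (ha : orderOf a = 4)
    (hy : y ∈ zpowers a) : y = 1 ∨ y = a ∨ y = a ^ 2 ∨ y = a⁻¹ := by
  obtain ⟨k, rfl⟩ := mem_zpowers_iff.1 hy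
  rw [← zpow_mod_orderOf, ha]
  have h4 : a ^ (4 : ℤ) = 1 := by rw [zpow_ofNat, ← ha, pow_orderOf_eq_one]
  have : k % 4 = 0 ∨ k % 4 = 1 ∨ k % 4 = 2 ∨ k % 4 = 3 := by omega
  rcases this with h | h | h | h <;> simp only [Nat.cast_ofNat, h]
  · simp
  · simp
  · simp
  · rw [show (3 : ℤ) = 4 - 1 by norm_num, zpow_sub_one, h4, one_mul]
    simp

theorem pow_four_eq_one_of_card_cyclic
    (hall : ∀ H : Subgroup G, IsCyclic H → H ≠ ⊥ → Nat.card H = 2 ∨ Nat.card H = 4) (x : G) :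
    x ^ 4 = 1 := by
  by_cases hx : x = 1
  · simp [hx]
  rw [← orderOf_dvd_iff_pow_eq_one, ← Nat.card_zpowers]
  rcases hall (zpowers x) inferInstance (by simpa [zpowers_eq_bot]) with h | h <;> norm_num [h]

theorem isPGroup_two_of_pow_four_eq_one (hexp : ∀ x : G, x ^ 4 = 1) : IsPGroup 2 G :=
  fun x => ⟨2, hexp x⟩

theorem orderOf_eq_four_iff (hexp : ∀ x : G, x ^ 4 = 1) {x : G} : orderOf x = 4 ↔ x ^ 2 ≠ 1 := by
  obtain ⟨i, hi, h⟩ := (Nat.dvd_prime_pow Nat.prime_two).1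
    (orderOf_dvd_of_pow_eq_one (by norm_num [hexp x] : x ^ 2 ^ 2 = 1))
  rw [Ne, ← orderOf_dvd_iff_pow_eq_one, h]
  interval_cases i <;> norm_num

/-- `x ↦ a x` matches the solutions of `x² = 1` with those of `x² = a²`, and the `x` with
`x² ∈ ⟨a⟩` lie over the solutions of `q² = 1` in `G ⧸ ⟨a⟩`, whose number has the parity of
`|G ⧸ ⟨a⟩|`. -/
theorem card_modEq_two_mul_card_sq_ne_one [Finite G] (hexp : ∀ x : G, x ^ 4 = 1) {a : G}
    (ha : orderOf a = 4) (hcent : a ∈ center G) :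
    Nat.card G ≡ 2 * Nat.card {x : G // x ^ 2 ≠ 1} [MOD 8] := by
  classical
  have := Fintype.ofFinite G
  have : (zpowers a).Normal := ⟨fun n hn g => by
    rwa [mem_center_iff.1 (zpowers_le.2 hcent hn) g, mul_inv_cancel_right]⟩
  have ha2 : a ^ 2 ≠ 1 := (orderOf_eq_four_iff hexp).1 ha
  have hsq_mem (x : G) : x ^ 2 ∈ zpowers a ↔ x ^ 2 = 1 ∨ x ^ 2 = a ^ 2 := by
    refine ⟨fun h => ?_, ?_⟩
    · have hx : (x ^ 2) ^ 2 = 1 := by rw [← pow_mul, hexp]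
      rcases eq_one_or_eq_or_eq_sq_or_eq_inv_of_mem_zpowers ha h with h | h | h | h <;>
        simp_all [inv_pow]
    · rintro (h | h) <;> rw [h]
      exacts [one_mem _, pow_mem (mem_zpowers a) 2]
  have hquot :
      Nat.card (G ⧸ zpowers a) ≡ Nat.card {q : G ⧸ zpowers a // q ^ 2 = 1} [MOD 2] :=
    card_modEq_card_sq_eq_one
  have hG : Nat.card G = 4 * Nat.card (G ⧸ zpowers a) := by
    rw [card_eq_card_quotient_mul_card_subgroup (zpowers a), Nat.card_zpowers, ha, mul_comm]
  have hM : Nat.card {x : G // x ^ 2 ∈ zpowers a} =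
      4 * Nat.card {q : G ⧸ zpowers a // q ^ 2 = 1} := by
    have h := QuotientGroup.card_preimage_mk (zpowers a) {q | q ^ 2 = 1}
    rw [Nat.card_zpowers, ha] at h
    refine (Nat.card_congr (Equiv.subtypeEquivRight fun x => ?_)).trans h
    rw [Set.mem_preimage, Set.mem_ofPred_eq, ← QuotientGroup.mk_pow, QuotientGroup.eq_one_iff]
  have hswap : Nat.card {x : G // x ^ 2 = 1} = Nat.card {x : G // x ^ 2 = a ^ 2} :=
    Nat.card_congr <| Equiv.subtypeEquiv (Equiv.mulLeft a) fun x => by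
      show x ^ 2 = 1 ↔ (a * x) ^ 2 = a ^ 2
      rw [(show Commute a x from (mem_center_iff.1 hcent x).symm).mul_pow, mul_eq_left]
  have hcompl :
      Nat.card {x : G // x ^ 2 ≠ 1} + Nat.card {x : G // x ^ 2 = 1} = Nat.card G := by
    simp only [Nat.card_eq_fintype_card, Ne]
    rw [Fintype.card_subtype_compl, Nat.sub_add_cancel (Fintype.card_subtype_le _)]
  have hunion : Nat.card {x : G // x ^ 2 ∈ zpowers a} =
      Nat.card {x : G // x ^ 2 = 1} + Nat.card {x : G // x ^ 2 = a ^ 2} := by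
    rw [Nat.card_congr (Equiv.subtypeEquivRight hsq_mem)]
    simp only [Nat.card_eq_fintype_card]
    exact Fintype.card_subtype_or_disjoint _ _ fun p h1 h2 x hx =>
      ha2 ((h2 x hx).symm.trans (h1 x hx))
  unfold Nat.ModEq at hquot ⊢
  omega

theorem card_sq_ne_one_eq_two_mul_card_cyclic [Finite G] (hexp : ∀ x : G, x ^ 4 = 1) :
    Nat.card {x : G // x ^ 2 ≠ 1} =
      2 * Nat.card {H : Subgroup G // IsCyclic H ∧ Nat.card H = 4} := by
  rw [← show Nat.totient 4 = 2 by decide, ← card_orderOf_eq_totient_mul_card_cyclic]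
  exact Nat.card_congr (Equiv.subtypeEquivRight fun x => (orderOf_eq_four_iff hexp).symm)

theorem centralizer_eq_zpowers_of_card_sq_ne_one_modEq [Finite G] (hexp : ∀ x : G, x ^ 4 = 1)
    {a : G} (ha : orderOf a = 4)
    (hnorm : ∀ x : G, x * a * x⁻¹ = a ∨ x * a * x⁻¹ = a⁻¹)
    (hY : Nat.card {x : G // x ^ 2 ≠ 1} ≡ 2 [MOD 4]) :
    centralizer {a} = zpowers a := by
  classical
  have := Fintype.ofFinite G
  set C := centralizer {a}
  have haC : a ∈ C := mem_centralizer_singleton_iff.2 rfl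
  have hout : 4 ∣ Nat.card {x : G // x ∉ C ∧ x ^ 2 ≠ 1} := by
    rw [← ha]
    refine orderOf_dvd_natCard_of_mul_mem (S := {x | x ∉ C ∧ x ^ 2 ≠ 1}) fun x ⟨hxC, hx⟩ => ?_
    have hxa : x * a * x⁻¹ = a⁻¹ := (hnorm x).resolve_left fun h =>
      hxC (mem_centralizer_singleton_iff.2 (mul_inv_eq_iff_eq_mul.1 h))
    have hsq : (x * a) ^ 2 = x ^ 2 := by
      calc (x * a) ^ 2 = (x * a * x⁻¹) * (x * (x * a * x⁻¹)⁻¹ * x⁻¹)⁻¹ * x ^ 2 := by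
            rw [sq, sq]; group
        _ = x ^ 2 := by rw [hxa, inv_inv, hxa]; group
    refine ⟨fun h => hxC ?_, hsq ▸ hx⟩
    simpa using mul_mem h (inv_mem haC)
  have hin : Nat.card C ≡ 2 * Nat.card {x : C // x ^ 2 ≠ 1} [MOD 8] :=
    card_modEq_two_mul_card_sq_ne_one (fun x => Subtype.ext (by simp [hexp]))
      (a := ⟨a, haC⟩) (by rw [Subgroup.orderOf_mk, ha])
      (mem_center_iff.2 fun x => Subtype.ext (mem_centralizer_singleton_iff.1 x.2))
  have hsplit : Nat.card {x : G // x ^ 2 ≠ 1} =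
      Nat.card {x : C // x ^ 2 ≠ 1} + Nat.card {x : G // x ∉ C ∧ x ^ 2 ≠ 1} := by
    have hC : Nat.card {x : C // x ^ 2 ≠ 1} = Nat.card {x : G // x ∈ C ∧ x ^ 2 ≠ 1} :=
      Nat.card_congr <| (Equiv.subtypeEquivRight fun x => by norm_cast).trans
        (Equiv.subtypeSubtypeEquivSubtypeInter (· ∈ C) (· ^ 2 ≠ 1))
    simp only [hC, Nat.card_eq_fintype_card]
    rw [← Fintype.card_subtype_or_disjoint _ _ fun p h1 h2 x hx => (h2 x hx).1 (h1 x hx).1]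
    exact Fintype.card_congr (Equiv.subtypeEquivRight fun x => by tauto)
  have h8 : Nat.card C % 8 = 4 := by
    unfold Nat.ModEq at hY hin
    omega
  obtain ⟨k, hk⟩ := ((isPGroup_two_of_pow_four_eq_one hexp).to_subgroup C).exists_card_eq
  have hC4 : Nat.card C = 4 := by
    rw [hk] at h8 ⊢
    rcases k with _ | _ | _ | k <;> simp [pow_succ] at h8 ⊢
    omega
  exact (eq_of_le_of_card_ge (zpowers_le.2 haC) (by rw [hC4, Nat.card_zpowers, ha])).symm

theorem conj_eq_or_eq_inv_of_normal {a : G} (ha : orderOf a = 4) [hN : (zpowers a).Normal]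
    (x : G) : x * a * x⁻¹ = a ∨ x * a * x⁻¹ = a⁻¹ := by
  have hord : orderOf (x * a * x⁻¹) = 4 := by rw [← MulAut.conj_apply, MulEquiv.orderOf_eq, ha]
  rcases eq_one_or_eq_or_eq_sq_or_eq_inv_of_mem_zpowers ha (hN.conj_mem a (mem_zpowers a) x) with
    h | h | h | h
  · simp [h] at hord
  · exact Or.inl h
  · rw [h, orderOf_pow' _ two_ne_zero, ha] at hord
    norm_num at hord
  · exact Or.inr h

section Presentations

variable {n : ℕ} [NeZero n] {a u : G}

theorem pow_val_add (ha : a ^ n = 1) (i j : ZMod n) :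
    a ^ (i + j).val = a ^ i.val * a ^ j.val := by
  rw [ZMod.val_add, ← pow_eq_pow_mod _ ha, pow_add]

theorem pow_val_neg (ha : a ^ n = 1) (i : ZMod n) : a ^ (-i).val = (a ^ i.val)⁻¹ :=
  eq_inv_of_mul_eq_one_left (by rw [← pow_val_add ha, neg_add_cancel, ZMod.val_zero, pow_zero])

theorem pow_val_eq_one_iff (ha : orderOf a = n) (i : ZMod n) : a ^ i.val = 1 ↔ i = 0 := by
  rw [← orderOf_dvd_iff_pow_eq_one, ha, ← ZMod.natCast_eq_zero_iff, ZMod.natCast_zmod_val]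

theorem exists_pow_val_eq_of_mem_zpowers (ha : orderOf a = n) {y : G} (hy : y ∈ zpowers a) :
    ∃ i : ZMod n, a ^ i.val = y := by
  obtain ⟨k, rfl⟩ := mem_zpowers_iff.1 hy
  refine ⟨k, ?_⟩
  rw [← zpow_natCast, ZMod.val_intCast, ← ha, zpow_mod_orderOf]

theorem pow_val_mul_of_conj_eq_inv (ha : a ^ n = 1) (hua : u * a * u⁻¹ = a⁻¹) (i : ZMod n) :
    a ^ i.val * u = u * a ^ (-i).val := by
  calc a ^ i.val * u = (u * a⁻¹ * u⁻¹) ^ i.val * u := by rw [← conj_inv, hua, inv_inv]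
    _ = u * a ^ (-i).val := by rw [conj_pow, pow_val_neg ha, inv_pow]; group

def dihedralGroupHom (ha : a ^ n = 1) (hu : u ^ 2 = 1) (hua : u * a * u⁻¹ = a⁻¹) :
    DihedralGroup n →* G :=
  MonoidHom.mk'
    (fun | .r i => a ^ i.val | .sr i => u * a ^ i.val)
    (by
      have hcomm := pow_val_mul_of_conj_eq_inv ha hua
      rintro (i | i) (j | j)
      · exact pow_val_add ha i j
      · show u * a ^ (j - i).val = a ^ i.val * (u * a ^ j.val)
        rw [← mul_assoc, hcomm, mul_assoc, ← pow_val_add ha, neg_add_eq_sub]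
      · show u * a ^ (i + j).val = u * a ^ i.val * a ^ j.val
        rw [mul_assoc, pow_val_add ha]
      · show a ^ (j - i).val = u * a ^ i.val * (u * a ^ j.val)
        rw [mul_assoc, ← mul_assoc (a ^ i.val), hcomm, ← mul_assoc, ← mul_assoc, ← sq, hu,
          one_mul, ← pow_val_add ha, neg_add_eq_sub])

def quaternionGroupHom (ha : a ^ (2 * n) = 1) (hu : u ^ 2 = a ^ n) (hua : u * a * u⁻¹ = a⁻¹) :
    QuaternionGroup n →* G :=
  MonoidHom.mk'
    (fun | .a i => a ^ i.val | .xa i => u * a ^ i.val)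
    (by
      have hcomm := pow_val_mul_of_conj_eq_inv ha hua
      have hn : (n : ZMod (2 * n)).val = n := by
        rw [ZMod.val_natCast, Nat.mod_eq_of_lt (by have := NeZero.pos n; omega)]
      rintro (i | i) (j | j)
      · exact pow_val_add ha i j
      · show u * a ^ (j - i).val = a ^ i.val * (u * a ^ j.val)
        rw [← mul_assoc, hcomm, mul_assoc, ← pow_val_add ha, neg_add_eq_sub]
      · show u * a ^ (i + j).val = u * a ^ i.val * a ^ j.val
        rw [mul_assoc, pow_val_add ha]
      · show a ^ ((n : ZMod (2 * n)) + j - i).val = u * a ^ i.val * (u * a ^ j.val)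
        rw [mul_assoc, ← mul_assoc (a ^ i.val), hcomm, ← mul_assoc, ← mul_assoc, ← sq, hu,
          mul_assoc, ← pow_val_add ha, add_sub_assoc, pow_val_add ha, hn, neg_add_eq_sub])

theorem nonempty_mulEquiv_dihedralGroup (ha : orderOf a = n) (hu : u ^ 2 = 1)
    (hua : u * a * u⁻¹ = a⁻¹) (hu_not : u ∉ zpowers a)
    (hgen : ∀ x, x ∈ zpowers a ∨ u⁻¹ * x ∈ zpowers a) :
    Nonempty (G ≃* DihedralGroup n) := by
  let f := dihedralGroupHom (ha ▸ pow_orderOf_eq_one a) hu hua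
  have hinj : Function.Injective f := (injective_iff_map_eq_one f).2 <| by
    rintro (i | i) h
    · rw [(pow_val_eq_one_iff ha i).1 h]; rfl
    · refine absurd ?_ hu_not
      rw [eq_inv_of_mul_eq_one_left h]
      exact inv_mem (pow_mem (mem_zpowers a) _)
  have hsurj : Function.Surjective f := by
    intro x
    rcases hgen x with hx | hx
    · obtain ⟨i, hi⟩ := exists_pow_val_eq_of_mem_zpowers ha hx
      exact ⟨.r i, hi⟩
    · obtain ⟨i, hi⟩ := exists_pow_val_eq_of_mem_zpowers ha hx
      exact ⟨.sr i, show u * a ^ i.val = x by rw [hi, mul_inv_cancel_left]⟩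
  exact ⟨(MulEquiv.ofBijective f ⟨hinj, hsurj⟩).symm⟩

theorem nonempty_mulEquiv_quaternionGroup (ha : orderOf a = 2 * n) (hu : u ^ 2 = a ^ n)
    (hua : u * a * u⁻¹ = a⁻¹) (hu_not : u ∉ zpowers a)
    (hgen : ∀ x, x ∈ zpowers a ∨ u⁻¹ * x ∈ zpowers a) :
    Nonempty (G ≃* QuaternionGroup n) := by
  let f := quaternionGroupHom (ha ▸ pow_orderOf_eq_one a) hu hua
  have hinj : Function.Injective f := (injective_iff_map_eq_one f).2 <| by
    rintro (i | i) h
    · rw [(pow_val_eq_one_iff ha i).1 h]; rfl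
    · refine absurd ?_ hu_not
      rw [eq_inv_of_mul_eq_one_left h]
      exact inv_mem (pow_mem (mem_zpowers a) _)
  have hsurj : Function.Surjective f := by
    intro x
    rcases hgen x with hx | hx
    · obtain ⟨i, hi⟩ := exists_pow_val_eq_of_mem_zpowers ha hx
      exact ⟨.a i, hi⟩
    · obtain ⟨i, hi⟩ := exists_pow_val_eq_of_mem_zpowers ha hx
      exact ⟨.xa i, show u * a ^ i.val = x by rw [hi, mul_inv_cancel_left]⟩
  exact ⟨(MulEquiv.ofBijective f ⟨hinj, hsurj⟩).symm⟩

end Presentations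

theorem nonempty_mulEquiv_of_centralizer_eq_zpowers {a : G} (ha : orderOf a = 4)
    (hnorm : ∀ x : G, x * a * x⁻¹ = a ∨ x * a * x⁻¹ = a⁻¹) (hcent : centralizer {a} = zpowers a) :
    Nonempty (G ≃* Multiplicative (ZMod 4)) ∨ Nonempty (G ≃* DihedralGroup 4) ∨
      Nonempty (G ≃* QuaternionGroup 2) := by
  have hmem (x : G) (hx : x * a * x⁻¹ = a) : x ∈ zpowers a := by
    rw [← hcent, mem_centralizer_singleton_iff]
    exact mul_inv_eq_iff_eq_mul.1 hx
  by_cases hab : ∀ x : G, x * a * x⁻¹ = a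
  · have htop : zpowers a = ⊤ := (eq_top_iff' _).2 fun x => hmem x (hab x)
    have : IsCyclic G := isCyclic_iff_exists_zpowers_eq_top.2 ⟨a, htop⟩
    refine Or.inl ⟨mulEquivOfCyclicCardEq ?_⟩
    rw [← Subgroup.card_top, ← htop, Nat.card_zpowers, ha, Nat.card_eq_fintype_card]
    rfl
  push Not at hab
  obtain ⟨u, hu⟩ := hab
  have hua : u * a * u⁻¹ = a⁻¹ := (hnorm u).resolve_left hu
  have hu_not : u ∉ zpowers a := fun h => hu <| by
    obtain ⟨k, rfl⟩ := mem_zpowers_iff.1 h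
    rw [((Commute.refl a).zpow_left k).eq, mul_inv_cancel_right]
  have hgen (x : G) : x ∈ zpowers a ∨ u⁻¹ * x ∈ zpowers a := by
    refine (hnorm x).imp (hmem x) fun hx => hmem _ ?_
    calc u⁻¹ * x * a * (u⁻¹ * x)⁻¹ = u⁻¹ * (x * a * x⁻¹) * u := by group
      _ = u⁻¹ * (u * a * u⁻¹) * u := by rw [hx, hua]
      _ = a := by group
  have hu2 : u ^ 2 ∈ zpowers a := hmem _ <| by
    calc u ^ 2 * a * (u ^ 2)⁻¹ = u * (u * a * u⁻¹) * u⁻¹ := by rw [sq]; group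
      _ = u * a⁻¹ * u⁻¹ := by rw [hua]
      _ = a := by rw [← conj_inv, hua, inv_inv]
  right
  rcases eq_one_or_eq_or_eq_sq_or_eq_inv_of_mem_zpowers ha hu2 with h | h | h | h
  · exact Or.inl (nonempty_mulEquiv_dihedralGroup ha h hua hu_not hgen)
  · exact absurd (by rw [← h]; group) hu
  · exact Or.inr (nonempty_mulEquiv_quaternionGroup ha h hua hu_not hgen)
  · refine absurd ?_ hu
    calc u * a * u⁻¹ = (u * a⁻¹ * u⁻¹)⁻¹ := by group
      _ = (u * u ^ 2 * u⁻¹)⁻¹ := by rw [h]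
      _ = (u ^ 2)⁻¹ := by group
      _ = a := by rw [h, inv_inv]

theorem card_sq_ne_one_congr {H : Type*} [Group H] (e : G ≃* H) :
    Nat.card {x : G // x ^ 2 ≠ 1} = Nat.card {y : H // y ^ 2 ≠ 1} :=
  Nat.card_congr <| e.toEquiv.subtypeEquiv fun x => by simp [← map_pow]

end

theorem stmt_15 (G : Type*) [Group G] [Finite G]
    (hall : ∀ H : Subgroup G, IsCyclic H → H ≠ ⊥ →
      Nat.card H = 2 ∨ Nat.card H = 4)
    (hodd : Odd (Nat.card {H : Subgroup G // IsCyclic H ∧ Nat.card H = 4})) :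
    (Nat.card {H : Subgroup G // IsCyclic H ∧ Nat.card H = 4} = 1 ∧
      (Nonempty (G ≃* Multiplicative (ZMod 4)) ∨ Nonempty (G ≃* DihedralGroup 4))) ∨
    (Nat.card {H : Subgroup G // IsCyclic H ∧ Nat.card H = 4} = 3 ∧
      Nonempty (G ≃* QuaternionGroup 2)) := by
  have hexp := pow_four_eq_one_of_card_cyclic hall
  have hY := card_sq_ne_one_eq_two_mul_card_cyclic hexp
  obtain ⟨K, hKn, hKc, hK4⟩ :=
    (isPGroup_two_of_pow_four_eq_one hexp).exists_normal_cyclic_of_not_dvd hodd.not_two_dvd_nat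
  obtain ⟨a, rfl⟩ := (K.isCyclic_iff_exists_zpowers_eq_top).1 hKc
  have ha : orderOf a = 4 := by rw [← Nat.card_zpowers, hK4]
  have hnorm := conj_eq_or_eq_inv_of_normal ha
  have hcent := centralizer_eq_zpowers_of_card_sq_ne_one_modEq hexp ha hnorm <| by
    obtain ⟨k, hk⟩ := hodd
    rw [Nat.ModEq, hY, hk]
    omega
  rcases nonempty_mulEquiv_of_centralizer_eq_zpowers ha hnorm hcent with h | h | h <;>
    obtain ⟨e⟩ := h <;> have hcount := hY ▸ card_sq_ne_one_congr e
  · have : Nat.card {y : Multiplicative (ZMod 4) // y ^ 2 ≠ 1} = 2 := by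
      rw [Nat.card_eq_fintype_card]; decide
    exact Or.inl ⟨by omega, Or.inl ⟨e⟩⟩
  · have : Nat.card {y : DihedralGroup 4 // y ^ 2 ≠ 1} = 2 := by
      rw [Nat.card_eq_fintype_card]; decide
    exact Or.inl ⟨by omega, Or.inr ⟨e⟩⟩
  · have : Nat.card {y : QuaternionGroup 2 // y ^ 2 ≠ 1} = 6 := by
      rw [Nat.card_eq_fintype_card]; decide
    exact Or.inr ⟨by omega, ⟨e⟩⟩
end
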